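/- In the free L-algebra L(X) on a well-ordered set X, every element of the basis N of normal L-words, under the weight-lexicographic order (comparing first total degree, then the operation with ≺ > ≻, then arguments lexicographically), forms a monomial order: for any normal L-words u, v with u > v and any ⋆-L-word w, one has [w|_u] > [w|_v], where [·] denotes the normal form. -/

import Mathlib

/-- `L`-words over an alphabet `X`: letters and the two binary operations
`pr` (≺) and `sc` (≻). -/
inductive LWord (X : Type) where
  | ltr : X → LWord X
  | pr : LWord X → LWord X → LWord X
  | sc : LWord X → LWord X → LWord X
deriving DecidableEq

/-- Number of letter occurrences in an `L`-word. -/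
def LWord.deg {X : Type} : LWord X → ℕ
  | .ltr _ => 1
  | .pr u v => u.deg + v.deg
  | .sc u v => u.deg + v.deg

/-- Normal `L`-words: letters; `v ≻ w` with `v, w` normal; and `v ≺ w` with
`v, w` normal and `v` not of the form `v₁ ≻ v₂`. -/
inductive IsNormalL {X : Type} : LWord X → Prop
  | ltr (x : X) : IsNormalL (.ltr x)
  | sc {v w : LWord X} : IsNormalL v → IsNormalL w → IsNormalL (.sc v w)
  | pr {v w : LWord X} : IsNormalL v → IsNormalL w →
      (∀ v1 v2 : LWord X, v ≠ .sc v1 v2) → IsNormalL (.pr v w)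

/-- Normalized `≺`-product: `[u ≺ v] = u ≺ v` unless `u = u₁ ≻ u₂`, in which
case `[u ≺ v] = u₁ ≻ [u₂ ≺ v]`. -/
def nprL {X : Type} : LWord X → LWord X → LWord X
  | .sc u1 u2, v => .sc u1 (nprL u2 v)
  | .ltr x, v => .pr (.ltr x) v
  | .pr u1 u2, v => .pr (.pr u1 u2) v

/-- The normal form of an `L`-word under the rewriting
`(x ≻ y) ≺ z → x ≻ (y ≺ z)`. -/
def nfL {X : Type} : LWord X → LWord X
  | .ltr x => .ltr x
  | .sc u v => .sc (nfL u) (nfL v)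
  | .pr u v => nprL (nfL u) (nfL v)

/-- The weight-lexicographic order on `L`-words from the paper: compare first
the degree `|u|`, then the operation (with `≺ = δ₂ > δ₁ = ≻`), then the
arguments lexicographically; letters of equal degree are compared in `X`. -/
def lltL {X : Type} [LinearOrder X] : LWord X → LWord X → Prop
  | .ltr x, .ltr y => x < y
  | .ltr _, .pr v1 v2 => 1 < (LWord.pr v1 v2).deg
  | .ltr _, .sc v1 v2 => 1 < (LWord.sc v1 v2).deg
  | .pr u1 u2, .ltr _ => (LWord.pr u1 u2).deg < 1
  | .sc u1 u2, .ltr _ => (LWord.sc u1 u2).deg < 1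
  | .pr u1 u2, .pr v1 v2 =>
      (LWord.pr u1 u2).deg < (LWord.pr v1 v2).deg ∨
        ((LWord.pr u1 u2).deg = (LWord.pr v1 v2).deg ∧
          (lltL u1 v1 ∨ (u1 = v1 ∧ lltL u2 v2)))
  | .pr u1 u2, .sc v1 v2 => (LWord.pr u1 u2).deg < (LWord.sc v1 v2).deg
  | .sc u1 u2, .pr v1 v2 =>
      (LWord.sc u1 u2).deg < (LWord.pr v1 v2).deg ∨
        (LWord.sc u1 u2).deg = (LWord.pr v1 v2).deg
  | .sc u1 u2, .sc v1 v2 =>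
      (LWord.sc u1 u2).deg < (LWord.sc v1 v2).deg ∨
        ((LWord.sc u1 u2).deg = (LWord.sc v1 v2).deg ∧
          (lltL u1 v1 ∨ (u1 = v1 ∧ lltL u2 v2)))

/-- Number of occurrences of the star `⋆` (the letter `none`). -/
def countStar {X : Type} : LWord (Option X) → ℕ
  | .ltr none => 1
  | .ltr (some _) => 0
  | .pr u v => countStar u + countStar v
  | .sc u v => countStar u + countStar v

/-- Substitute an `L`-word `s` for the star in a `⋆`-`L`-word. -/
def substStar {X : Type} : LWord (Option X) → LWord X → LWord X
  | .ltr none, s => s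
  | .ltr (some x), _ => .ltr x
  | .pr u v, s => .pr (substStar u s) (substStar v s)
  | .sc u v, s => .sc (substStar u s) (substStar v s)

/-!
Normalization is compositional: `nfL` sends `w₁ ≻ w₂` and `w₁ ≺ w₂` to `≻`, resp. `nprL`,
of the normalized factors. Both are strictly monotone in each argument, since comparisons
are decided by degree first and `nprL` only reassociates a `≻`-prefix of its left argument
without changing degrees. Induction on the `⋆`-word then carries `v < u` through the factor
containing `⋆`, the other factor being the same on both sides.
-/

namespace LWord

variable {X : Type}

lemma one_le_deg : ∀ a : LWord X, 1 ≤ a.deg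
  | .ltr _ => le_rfl
  | .pr u _ | .sc u _ => le_add_right (one_le_deg u)

lemma deg_nprL : ∀ a b : LWord X, (nprL a b).deg = a.deg + b.deg
  | .ltr _, _ | .pr _ _, _ => rfl
  | .sc _ u, b => by simp only [nprL, deg, deg_nprL u b]; omega

lemma nfL_eq_self {a : LWord X} (h : IsNormalL a) : nfL a = a := by
  induction h with
  | ltr x => rfl
  | sc _ _ ihv ihw => rw [nfL, ihv, ihw]
  | @pr v _ _ _ hns ihv ihw =>
    rw [nfL, ihv, ihw]
    cases v with
    | ltr _ | pr _ _ => rfl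
    | sc v1 v2 => exact absurd rfl (hns v1 v2)

lemma substStar_eq_of_countStar_eq_zero {w : LWord (Option X)} (h : countStar w = 0)
    (s t : LWord X) : substStar w s = substStar w t := by
  induction w with
  | ltr o => cases o <;> simp_all [countStar, substStar]
  | pr w1 w2 ih1 ih2 | sc w1 w2 ih1 ih2 =>
    simp only [countStar, Nat.add_eq_zero_iff] at h
    rw [substStar, substStar, ih1 h.1, ih2 h.2]

section Order

variable [LinearOrder X] {a a' b b' : LWord X}

lemma deg_le_of_lltL (h : lltL a b) : a.deg ≤ b.deg := by
  cases a <;> cases b <;> simp only [lltL, deg] at h ⊢ <;> omega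

lemma lltL_of_deg_lt (h : a.deg < b.deg) : lltL a b := by
  cases a <;> cases b <;> simp only [lltL, deg] at h ⊢ <;> omega

lemma lltL_pr_left (h : lltL a a') : lltL (pr a b) (pr a' b) := by
  rcases (deg_le_of_lltL h).lt_or_eq with hd | hd
  · exact lltL_of_deg_lt (by simp only [deg]; omega)
  · exact Or.inr ⟨by rw [deg, deg, hd], Or.inl h⟩

lemma lltL_pr_right (h : lltL b b') : lltL (pr a b) (pr a b') := by
  rcases (deg_le_of_lltL h).lt_or_eq with hd | hd
  · exact lltL_of_deg_lt (by simp only [deg]; omega)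
  · exact Or.inr ⟨by rw [deg, deg, hd], Or.inr ⟨rfl, h⟩⟩

lemma lltL_sc_left (h : lltL a a') : lltL (sc a b) (sc a' b) := by
  rcases (deg_le_of_lltL h).lt_or_eq with hd | hd
  · exact lltL_of_deg_lt (by simp only [deg]; omega)
  · exact Or.inr ⟨by rw [deg, deg, hd], Or.inl h⟩

lemma lltL_sc_right (h : lltL b b') : lltL (sc a b) (sc a b') := by
  rcases (deg_le_of_lltL h).lt_or_eq with hd | hd
  · exact lltL_of_deg_lt (by simp only [deg]; omega)
  · exact Or.inr ⟨by rw [deg, deg, hd], Or.inr ⟨rfl, h⟩⟩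

lemma lltL_nprL_right (h : lltL b b') : lltL (nprL a b) (nprL a b') := by
  induction a with
  | ltr _ | pr _ _ => exact lltL_pr_right h
  | sc _ _ _ ih => exact lltL_sc_right ih

lemma lltL_nprL_left (h : lltL a a') : lltL (nprL a b) (nprL a' b) := by
  induction a generalizing a' with
  | ltr x =>
    cases a' with
    | ltr _ => exact lltL_pr_left h
    | pr _ _ | sc _ _ =>
      exact lltL_of_deg_lt (by rw [deg_nprL, deg_nprL]; simp only [lltL, deg] at h ⊢; omega)
  | pr a1 a2 =>
    cases a' with
    | ltr _ => have := one_le_deg a1; simp only [lltL, deg] at h; omega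
    | pr _ _ => exact lltL_pr_left h
    | sc _ _ =>
      exact lltL_of_deg_lt (by rw [deg_nprL, deg_nprL]; simp only [lltL, deg] at h ⊢; omega)
  | sc a1 a2 _ ih =>
    cases a' with
    | ltr _ => have := one_le_deg a1; simp only [lltL, deg] at h; omega
    | pr _ _ => simp only [lltL, nprL, deg, deg_nprL] at h ⊢; omega
    | sc v1 v2 =>
      rcases h with hd | ⟨hd, h1 | ⟨rfl, h2⟩⟩
      · exact lltL_of_deg_lt (by rw [deg_nprL, deg_nprL]; omega)
      · exact Or.inr ⟨by simp only [deg, deg_nprL] at hd ⊢; omega, Or.inl h1⟩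
      · exact lltL_sc_right (ih h2)

lemma lltL_nfL_substStar {s t : LWord X} (h : lltL (nfL s) (nfL t))
    {w : LWord (Option X)} (hw : countStar w = 1) :
    lltL (nfL (substStar w s)) (nfL (substStar w t)) := by
  induction w with
  | ltr o => cases o <;> simp_all [countStar, substStar]
  | pr w1 w2 ih1 ih2 =>
    simp only [countStar] at hw
    obtain ⟨h1, h2⟩ | ⟨h1, h2⟩ :
        countStar w1 = 0 ∧ countStar w2 = 1 ∨ countStar w1 = 1 ∧ countStar w2 = 0 := by omega
    · rw [substStar, substStar, substStar_eq_of_countStar_eq_zero h1 s t]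
      exact lltL_nprL_right (ih2 h2)
    · rw [substStar, substStar, substStar_eq_of_countStar_eq_zero h2 s t]
      exact lltL_nprL_left (ih1 h1)
  | sc w1 w2 ih1 ih2 =>
    simp only [countStar] at hw
    obtain ⟨h1, h2⟩ | ⟨h1, h2⟩ :
        countStar w1 = 0 ∧ countStar w2 = 1 ∨ countStar w1 = 1 ∧ countStar w2 = 0 := by omega
    · rw [substStar, substStar, substStar_eq_of_countStar_eq_zero h1 s t]
      exact lltL_sc_right (ih2 h2)
    · rw [substStar, substStar, substStar_eq_of_countStar_eq_zero h2 s t]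
      exact lltL_sc_left (ih1 h1)

end Order

end LWord

theorem lword_order_is_monomial_general (X : Type) [LinearOrder X]
    (u v : LWord X) (hu : IsNormalL u) (hv : IsNormalL v) (hlt : lltL v u)
    (w : LWord (Option X)) (hw : countStar w = 1) :
    lltL (nfL (substStar w v)) (nfL (substStar w u)) :=
  LWord.lltL_nfL_substStar (by rwa [LWord.nfL_eq_self hu, LWord.nfL_eq_self hv]) hw

/-- The weight-lexicographic order on normal `L`-words is monomial: if `u > v`
(i.e. `lltL v u`) then for every `⋆`-`L`-word `w` (one occurrence of `⋆`),
`[w|_u] > [w|_v]`. -/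
theorem lword_order_is_monomial (X : Type) [LinearOrder X] [WellFoundedLT X]
    (u v : LWord X) (hu : IsNormalL u) (hv : IsNormalL v) (hlt : lltL v u)
    (w : LWord (Option X)) (hw : countStar w = 1) :
    lltL (nfL (substStar w v)) (nfL (substStar w u)) :=
  lword_order_is_monomial_general X u v hu hv hlt w hw
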